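/- arXiv:1305.1071 — 3 statements merged into one kernel-verified Lean document; each statement's English description precedes it below -/
import Mathlib

section
/- Let E be a free group and F a normal subgroup of E. Then the quotient group E/[F,F] is torsion-free. -/
/-!
Suppose `x ^ n ∈ [F, F]` with `n ≠ 0`. By Nielsen–Schreier both `F` and `H = F ⊔ ⟨x⟩` are free,
and the abelianization of a free group is free abelian, hence torsion-free: so `y ^ n ∈ [K, K]`
forces `y ∈ [K, K]` for `y` in a free subgroup `K`. As `H / F` is cyclic, `[H, H] ≤ F`; hence
`x ^ n ∈ [H, H]` gives `x ∈ F`, and then `x ^ n ∈ [F, F]` gives `x ∈ [F, F]`.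
-/

universe u

/-- The Mathlib (Dec 2024) definition, removed since: a monoid is torsion-free if no element
other than `1` has finite order. -/
def Monoid.IsTorsionFree (G : Type*) [Monoid G] : Prop :=
  ∀ g : G, g ≠ 1 → ¬IsOfFinOrder g

instance FreeAbelianGroup.instIsAddTorsionFree (X : Type*) :
    IsAddTorsionFree (FreeAbelianGroup X) :=
  (equivFinsupp X).injective.isAddTorsionFree (equivFinsupp X).toAddMonoidHom

instance Abelianization.instIsMulTorsionFree (G : Type*) [Group G] [IsFreeGroup G] :
    IsMulTorsionFree (Abelianization G) :=
  let e : Abelianization G ≃* Multiplicative (FreeAbelianGroup (IsFreeGroup.Generators G)) :=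
    (IsFreeGroup.toFreeGroup G).abelianizationCongr
  e.injective.isMulTorsionFree e.toMonoidHom

theorem IsFreeGroup.mem_commutator_of_pow_mem {G : Type*} [Group G] [IsFreeGroup G] {g : G}
    {n : ℕ} (hn : n ≠ 0) (h : g ^ n ∈ commutator G) : g ∈ commutator G := by
  rw [← Abelianization.ker_of, MonoidHom.mem_ker] at h ⊢
  exact IsMulTorsionFree.pow_left_injective hn (by simpa using h)

theorem Subgroup.mem_commutator_of_pow_mem {G : Type*} [Group G] {H : Subgroup G}
    [IsFreeGroup H] {x : G} (hx : x ∈ H) {n : ℕ} (hn : n ≠ 0) (h : x ^ n ∈ ⁅H, H⁆) :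
    x ∈ ⁅H, H⁆ := by
  rw [← H.map_subtype_commutator] at h ⊢
  obtain ⟨y, hy, hyx⟩ := h
  obtain rfl : y = ⟨x, hx⟩ ^ n := Subtype.ext (by simpa using hyx)
  exact ⟨_, IsFreeGroup.mem_commutator_of_pow_mem hn hy, rfl⟩

theorem Subgroup.commutator_sup_zpowers_le {G : Type*} [Group G] (N : Subgroup G) [N.Normal]
    (x : G) : ⁅N ⊔ zpowers x, N ⊔ zpowers x⁆ ≤ N := by
  have hcyclic : (N ⊔ zpowers x).map (QuotientGroup.mk' N) = zpowers (x : G ⧸ N) := by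
    rw [map_sup, QuotientGroup.map_mk'_self, bot_sup_eq, MonoidHom.map_zpowers]
    rfl
  have hbot : ⁅N ⊔ zpowers x, N ⊔ zpowers x⁆.map (QuotientGroup.mk' N) = ⊥ := by
    rw [map_commutator, hcyclic, commutator_self_eq_bot_iff]
    infer_instance
  rwa [map_eq_bot_iff, QuotientGroup.ker_mk'] at hbot

/-- Let `E` be a free group and `F` a normal subgroup of `E`. Then `E/[F,F]` is
torsion-free. -/
theorem free_quotient_commutator_torsionFree (E : Type u) [Group E] [IsFreeGroup E]
    (F : Subgroup E) [F.Normal] :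
    Monoid.IsTorsionFree (E ⧸ (⁅F, F⁆ : Subgroup E)) := by
  intro g hg hfin
  obtain ⟨n, hn, hxn⟩ := isOfFinOrder_iff_pow_eq_one.mp hfin
  obtain ⟨x, rfl⟩ := QuotientGroup.mk_surjective g
  rw [← QuotientGroup.mk_pow, QuotientGroup.eq_one_iff] at hxn
  refine hg ((QuotientGroup.eq_one_iff x).mpr ?_)
  set H := F ⊔ Subgroup.zpowers x
  have hxH : x ∈ H := Subgroup.mem_sup_right (Subgroup.mem_zpowers x)
  have hFH : F ≤ H := le_sup_left
  have hxF : x ∈ F := F.commutator_sup_zpowers_le x <|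
    Subgroup.mem_commutator_of_pow_mem hxH hn.ne' (Subgroup.commutator_mono hFH hFH hxn)
  exact Subgroup.mem_commutator_of_pow_mem hxF hn.ne' hxn
end

section
/- If a group G has the factorization property and K is a finite index subgroup of G, then K has the factorization property. -/
universe u

/-!
Given `f : K →* P` with `P` finite, the kernel of `f` has finite index in `K`, hence in `G`, so it
contains the trace on `K` of a normal subgroup `C` of finite index in `G`. Factoring `G → G ⧸ C`
through a torsion-free elementary amenable group `M` gives `φ : K → M` with `ker φ ≤ ker f`, so `f`
factors through `K ⧸ ker φ`, which embeds in `M` and is therefore torsion-free elementary amenable.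
-/

/-- The class of elementary amenable groups: the smallest class of groups containing
all finite groups and all abelian groups, closed under subgroups, quotients,
extensions, and directed unions (and isomorphism). -/
inductive ElementaryAmenable : ∀ (G : Type u) [Group G], Prop
  | of_finite (G : Type u) [Group G] (h : Finite G) : ElementaryAmenable G
  | of_abelian (G : Type u) [Group G] (h : ∀ a b : G, a * b = b * a) : ElementaryAmenable G
  | of_subgroup (G : Type u) [Group G] (H : Subgroup G) (h : ElementaryAmenable G) :
      ElementaryAmenable H
  | of_quotient (G : Type u) [Group G] (N : Subgroup G) [N.Normal] (h : ElementaryAmenable G) :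
      ElementaryAmenable (G ⧸ N)
  | of_extension (G : Type u) [Group G] (N : Subgroup G) [N.Normal]
      (hN : ElementaryAmenable N) (hQ : ElementaryAmenable (G ⧸ N)) : ElementaryAmenable G
  | of_directedUnion (G : Type u) [Group G] (ι : Type u) (K : ι → Subgroup G)
      (hdir : Directed (· ≤ ·) K) (hsup : (⨆ i, K i) = ⊤)
      (h : ∀ i, ElementaryAmenable (K i)) : ElementaryAmenable G
  | of_mulEquiv (G H : Type u) [Group G] [Group H] (e : G ≃* H) (h : ElementaryAmenable G) :
      ElementaryAmenable H

/-- A group `H` has the factorization property if every homomorphism from `H` to a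
finite group factors through a torsion-free elementary amenable group. -/
def HasFactorizationProperty (H : Type u) [Group H] : Prop :=
  ∀ (P : GrpCat.{u}), Finite P → ∀ f : H →* P,
    ∃ (M : GrpCat.{u}) (g : H →* M) (h : (M : Type u) →* P),
      (∀ g : M, g ≠ 1 → ¬IsOfFinOrder g) ∧ ElementaryAmenable M ∧ h.comp g = f

theorem ElementaryAmenable.of_injective {H M : Type u} [Group H] [Group M] (φ : H →* M)
    (hφ : Function.Injective φ) (hM : ElementaryAmenable M) : ElementaryAmenable H :=
  .of_mulEquiv _ _ (MonoidHom.ofInjective hφ).symm (.of_subgroup M φ.range hM)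

theorem not_isOfFinOrder_of_injective {H M : Type u} [Group H] [Group M] (φ : H →* M)
    (hφ : Function.Injective φ) (hM : ∀ g : M, g ≠ 1 → ¬IsOfFinOrder g) :
    ∀ g : H, g ≠ 1 → ¬IsOfFinOrder g := fun g hg hfin =>
  hM (φ g) ((map_ne_one_iff φ hφ).mpr hg) (φ.isOfFinOrder hfin)

theorem exists_factorization_of_ker_le {H P M : Type u} [Group H] [Group P] [Group M]
    (hM_tf : ∀ g : M, g ≠ 1 → ¬IsOfFinOrder g) (hM : ElementaryAmenable M)
    (φ : H →* M) (f : H →* P) (hker : φ.ker ≤ f.ker) :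
    ∃ (M' : GrpCat.{u}) (g : H →* M') (h : (M' : Type u) →* P),
      (∀ g : M', g ≠ 1 → ¬IsOfFinOrder g) ∧ ElementaryAmenable M' ∧ h.comp g = f := by
  have hι : Function.Injective (QuotientGroup.kerLift φ) := QuotientGroup.kerLift_injective φ
  exact ⟨GrpCat.of (H ⧸ φ.ker), QuotientGroup.mk' φ.ker, QuotientGroup.lift φ.ker f hker,
    not_isOfFinOrder_of_injective _ hι hM_tf, .of_injective _ hι hM, by ext; simp⟩

theorem Subgroup.exists_normal_finiteIndex_subgroupOf_le {G : Type*} [Group G] (K : Subgroup G)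
    [K.FiniteIndex] (L : Subgroup K) [L.FiniteIndex] :
    ∃ C : Subgroup G, C.Normal ∧ C.FiniteIndex ∧ C.subgroupOf K ≤ L := by
  have : (L.map K.subtype).FiniteIndex :=
    ⟨by rw [index_map_subtype]
        exact mul_ne_zero FiniteIndex.index_ne_zero FiniteIndex.index_ne_zero⟩
  refine ⟨(L.map K.subtype).normalCore, normalCore_normal _, inferInstance, fun k hk => ?_⟩
  obtain ⟨l, hl, hlk⟩ := mem_map.mp (normalCore_le _ (mem_subgroupOf.mp hk))
  rwa [← K.subtype_injective hlk]

/-- The factorization property passes to finite index subgroups. -/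
theorem finiteIndex_subgroup_hasFactorizationProperty (G : Type u) [Group G]
    (hG : HasFactorizationProperty G) (K : Subgroup G) [K.FiniteIndex] :
    HasFactorizationProperty K := by
  intro P _ f
  have : f.ker.FiniteIndex := Subgroup.finiteIndex_ker f
  obtain ⟨C, _, _, hCf⟩ := K.exists_normal_finiteIndex_subgroupOf_le f.ker
  obtain ⟨M, g, h, hM_tf, hM, hgh⟩ :=
    hG (GrpCat.of (G ⧸ C)) Subgroup.finite_quotient_of_finiteIndex (QuotientGroup.mk' C)
  refine exists_factorization_of_ker_le hM_tf hM (g.comp K.subtype) f fun k hk => hCf ?_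
  have : QuotientGroup.mk' C (k : G) = 1 := by
    rw [← hgh, MonoidHom.comp_apply, show g k = 1 from hk, map_one]
  exact Subgroup.mem_subgroupOf.mpr ((QuotientGroup.eq_one_iff _).mp this)
end

section
/- Let G be a group, H a finite index normal subgroup of G, and U a normal subgroup of H such that H/U is torsion-free. Let U^G = ⋂_{g ∈ G} gUg⁻¹ be the normal core of U in G. Then H/U^G is torsion-free. -/
universe u

/-!
A quotient `Q ⧸ K` is torsion-free exactly when `K` contains every root in `Q` of its elements.
This root-closedness survives preimages under homomorphisms and arbitrary intersections, and
`U^G ∩ H` is the intersection, over `g : G`, of the preimages of `U ∩ H` under conjugation of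
`H` by `g`.
-/

namespace Subgroup

variable {Q : Type*} [Group Q]

def IsRootClosed (K : Subgroup Q) : Prop :=
  ∀ x : Q, ∀ n : ℕ, 0 < n → x ^ n ∈ K → x ∈ K

theorem isRootClosed_iff_isTorsionFree_quotient (K : Subgroup Q) [K.Normal] :
    K.IsRootClosed ↔ Monoid.IsTorsionFree (Q ⧸ K) := by
  have mk_pow_eq_one_iff (x : Q) (n : ℕ) : (x : Q ⧸ K) ^ n = 1 ↔ x ^ n ∈ K := by
    rw [← QuotientGroup.mk_pow, QuotientGroup.eq_one_iff]
  constructor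
  · intro hK x hx hfin
    obtain ⟨x, rfl⟩ := QuotientGroup.mk_surjective x
    obtain ⟨n, hn, hxn⟩ := hfin.exists_pow_eq_one
    exact hx ((QuotientGroup.eq_one_iff x).2 (hK x n hn ((mk_pow_eq_one_iff x n).1 hxn)))
  · intro hK x n hn hxn
    rw [← QuotientGroup.eq_one_iff]
    by_contra hx
    exact hK _ hx (isOfFinOrder_iff_pow_eq_one.2 ⟨n, hn, (mk_pow_eq_one_iff x n).2 hxn⟩)

theorem IsRootClosed.comap {P : Type*} [Group P] {K : Subgroup Q} (hK : K.IsRootClosed)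
    (f : P →* Q) : (K.comap f).IsRootClosed := fun x n hn hxn =>
  hK (f x) n hn (by simpa only [mem_comap, map_pow] using hxn)

theorem isRootClosed_iInf {ι : Sort*} {K : ι → Subgroup Q} (hK : ∀ i, (K i).IsRootClosed) :
    (⨅ i, K i).IsRootClosed := fun x n hn hxn =>
  mem_iInf.2 fun i => hK i x n hn (mem_iInf.1 hxn i)

theorem normalCore_subgroupOf_eq_iInf_comap_conjNormal {G : Type*} [Group G] (U H : Subgroup G)
    [H.Normal] :
    U.normalCore.subgroupOf H =
      ⨅ g : G, (U.subgroupOf H).comap (MulAut.conjNormal g).toMonoidHom := by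
  ext x
  simp only [mem_subgroupOf, mem_iInf, mem_comap]
  rfl

end Subgroup

theorem quotient_normalCore_torsionFree_general (G : Type u) [Group G] (H : Subgroup G)
    [H.Normal] (U : Subgroup G)
    [hU : (U.subgroupOf H).Normal]
    (hTF : Monoid.IsTorsionFree ((H : Type u) ⧸ U.subgroupOf H)) :
    Monoid.IsTorsionFree ((H : Type u) ⧸ U.normalCore.subgroupOf H) := by
  rw [← Subgroup.isRootClosed_iff_isTorsionFree_quotient] at hTF ⊢
  rw [Subgroup.normalCore_subgroupOf_eq_iInf_comap_conjNormal]
  exact Subgroup.isRootClosed_iInf fun g => hTF.comap _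

/-- If `H` is a finite index normal subgroup of `G`, `U ≤ H` is normal in `H` with
`H/U` torsion-free, then `H/U^G` is torsion-free, where `U^G` is the normal core. -/
theorem quotient_normalCore_torsionFree (G : Type u) [Group G] (H : Subgroup G)
    [H.Normal] [H.FiniteIndex] (U : Subgroup G) (hUH : U ≤ H)
    [hU : (U.subgroupOf H).Normal]
    (hTF : Monoid.IsTorsionFree ((H : Type u) ⧸ U.subgroupOf H)) :
    Monoid.IsTorsionFree ((H : Type u) ⧸ U.normalCore.subgroupOf H) :=
  quotient_normalCore_torsionFree_general G H U (hU := hU) hTF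
end
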